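/- arXiv:1212.6106 — 3 statements merged into one kernel-verified Lean document; each statement's English description precedes it below -/
import Mathlib

section
/- In the max-plus semiring ℝ_{max,+} = (ℝ ∪ {−∞}, max, +), for an n×n matrix A, λ is an eigenvalue with eigenvector x (a nonzero vector satisfying A ⊗ x = λ ⊗ x, i.e., max_j (a_{ij} + x_j) = λ + x_i for all i) only if λ ≤ ⊕_{m=1}^{n} (tr(A^m))^{1/m}, i.e., λ ≤ max_{1≤m≤n} (1/m)·tr(A^m) where trace and powers are tropical. -/
noncomputable section

/-- The carrier of the max-plus semiring `ℝ_{max,+}`: the reals with `−∞` adjoined,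
with tropical addition `⊔ = max` and tropical multiplication `+`. -/
local notation "R" => WithBot ℝ

/-- Max-plus matrix product: `{AB}_{ij} = max_k (a_{ik} + b_{kj})`. -/
def tmul {n : ℕ} (A B : Fin n → Fin n → R) : Fin n → Fin n → R :=
  fun i j => Finset.univ.sup fun k => A i k + B k j

/-- The max-plus identity matrix: `0` on the diagonal, `−∞` elsewhere. -/
def idMat (n : ℕ) : Fin n → Fin n → R :=
  fun i j => if i = j then 0 else ⊥

/-- Max-plus matrix power. -/
def tpow {n : ℕ} (A : Fin n → Fin n → R) : ℕ → (Fin n → Fin n → R)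
  | 0 => idMat n
  | m + 1 => tmul A (tpow A m)

/-- Tropical trace: `tr A = max_i a_{ii}`. -/
def ttr {n : ℕ} (A : Fin n → Fin n → R) : R :=
  Finset.univ.sup fun i => A i i

/-- Max-plus matrix-vector product. -/
def matVec {n : ℕ} (A : Fin n → Fin n → R) (x : Fin n → R) : Fin n → R :=
  fun i => Finset.univ.sup fun k => A i k + x k

/-- The tropical `m`-th root of a scalar: `t^{1/m} = t/m` in conventional arithmetic. -/
def troot (m : ℕ) (t : R) : R := t.map fun r => r / m

/-- The tropical spectral radius `λ = ⊕_{m=1}^n tr^{1/m}(A^m)`. -/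
def specRad {n : ℕ} (A : Fin n → Fin n → R) : R :=
  (Finset.Icc 1 n).sup fun m => troot m (ttr (tpow A m))

/-- A matrix is irreducible iff its digraph (of non-`−∞` entries) is strongly connected,
equivalently every pair `(i, j)` is connected by a path of some positive length `m`. -/
def Irred {n : ℕ} (A : Fin n → Fin n → R) : Prop :=
  ∀ i j : Fin n, ∃ m : ℕ, 1 ≤ m ∧ tpow A m i j ≠ ⊥

/-- `Tr(A) = tr A ⊕ ⋯ ⊕ tr Aⁿ`. -/
def Tr {n : ℕ} (A : Fin n → Fin n → R) : R :=
  (Finset.Icc 1 n).sup fun m => ttr (tpow A m)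

/-- The Kleene star `A* = I ⊕ A ⊕ ⋯ ⊕ A^{n−1}`. -/
def star {n : ℕ} (A : Fin n → Fin n → R) : Fin n → Fin n → R :=
  fun i j => (Finset.range n).sup fun m => tpow A m i j

/-- The regular vector `x ∈ ℝⁿ` viewed in `(ℝ ∪ {−∞})ⁿ`. -/
def vec {n : ℕ} (x : Fin n → ℝ) : Fin n → R := fun i => (x i : R)

/-- The objective function `x⁻ A x = max_{i,j} (−x_i + a_{ij} + x_j)` for regular `x`. -/
def quadForm {n : ℕ} (A : Fin n → Fin n → R) (x : Fin n → ℝ) : R :=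
  Finset.univ.sup fun p : Fin n × Fin n => ((-(x p.1) : ℝ) : R) + A p.1 p.2 + ((x p.2 : ℝ) : R)

/-- Tropical division `a ⊗ t⁻¹`, i.e. conventional `a − t`, with value `−∞`
whenever `a = −∞` or `t = −∞`. -/
def tdiv (a t : R) : R :=
  WithBot.recBotCoe ⊥ (fun r => t.map fun s => r - s) a

/-! Following arcs `i → f i` that attain the maxima in `A ⊗ x = λ ⊗ x`, from a finite
coordinate of `x`, one stays among finite coordinates and eventually enters a cycle, of some
length `m ≤ n` through some `j`. Going once around it gives `m λ + x_j ≤ (A^m)_{jj} + x_j`, and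
cancelling the finite `x_j` leaves `λ ≤ tr(A^m)/m`. -/

open Function

theorem Function.exists_iterate_mem_periodicPts {α : Type*} [Finite α] (f : α → α) (x : α) :
    ∃ a, f^[a] x ∈ periodicPts f := by
  obtain ⟨a, b, hab, he⟩ := Finite.exists_ne_map_eq_of_infinite fun k : ℕ => f^[k] x
  wlog h : a < b generalizing a b
  · exact this b a hab.symm he.symm (by omega)
  refine ⟨a, mk_mem_periodicPts (Nat.sub_pos_of_lt h) ?_⟩
  change f^[b - a] (f^[a] x) = f^[a] x
  rw [← iterate_add_apply, Nat.sub_add_cancel h.le]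
  exact he.symm

theorem exists_add_eq_matVec {n : ℕ} [Nonempty (Fin n)] (A : Fin n → Fin n → R)
    (x : Fin n → R) (i : Fin n) : ∃ j, A i j + x j = matVec A x i := by
  obtain ⟨j, -, hj⟩ := Finset.exists_mem_eq_sup _ Finset.univ_nonempty fun k => A i k + x k
  exact ⟨j, hj.symm⟩

theorem le_troot {m : ℕ} (hm : 0 < m) {lam t : R} (h : m • lam ≤ t) : lam ≤ troot m t := by
  induction lam with
  | bot => exact bot_le
  | coe l =>
    induction t with
    | bot => exact absurd (le_bot_iff.mp h) (WithBot.coe_nsmul l m ▸ WithBot.coe_ne_bot)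
    | coe T =>
      rw [← WithBot.coe_nsmul, WithBot.coe_le_coe, nsmul_eq_mul] at h
      exact WithBot.coe_le_coe.mpr ((le_div_iff₀ (by exact_mod_cast hm)).mpr (by linarith))

theorem troot_ttr_tpow_le_specRad {n : ℕ} (A : Fin n → Fin n → R) {m : ℕ} (hm : 0 < m)
    (hmn : m ≤ n) : troot m (ttr (tpow A m)) ≤ specRad A :=
  Finset.le_sup (f := fun k => troot k (ttr (tpow A k))) (Finset.mem_Icc.mpr ⟨hm, hmn⟩)

section

variable {n : ℕ} {A : Fin n → Fin n → R} {x : Fin n → R} {lam : R} {f : Fin n → Fin n}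

theorem add_le_tpow_iterate (hf : ∀ i, lam + x i ≤ A i (f i) + x (f i)) (m : ℕ) (i : Fin n) :
    m • lam + x i ≤ tpow A m i (f^[m] i) + x (f^[m] i) := by
  induction m generalizing i with
  | zero => simp [tpow, idMat]
  | succ m ih =>
    set k := f^[m] (f i)
    rw [iterate_succ_apply]
    calc (m + 1) • lam + x i = m • lam + (lam + x i) := by rw [succ_nsmul, add_assoc]
      _ ≤ m • lam + (A i (f i) + x (f i)) := add_le_add_right (hf i) _
      _ = A i (f i) + (m • lam + x (f i)) := by ac_rfl
      _ ≤ A i (f i) + (tpow A m (f i) k + x k) := add_le_add_right (ih (f i)) _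
      _ = (A i (f i) + tpow A m (f i) k) + x k := (add_assoc ..).symm
      _ ≤ tpow A (m + 1) i k + x k := by
        gcongr
        exact Finset.le_sup (f := fun l => A i l + tpow A m l k) (Finset.mem_univ (f i))

theorem apply_iterate_ne_bot (hf : ∀ i, lam + x i ≤ A i (f i) + x (f i)) (hlam : lam ≠ ⊥)
    {i : Fin n} (hi : x i ≠ ⊥) (a : ℕ) : x (f^[a] i) ≠ ⊥ :=
  Iterate.rec (fun k => x k ≠ ⊥) hi (fun k hk => (WithBot.add_ne_bot.mp
    (ne_bot_of_le_ne_bot (WithBot.add_ne_bot.mpr ⟨hlam, hk⟩) (hf k))).2) a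

theorem nsmul_le_ttr_tpow (hf : ∀ i, lam + x i ≤ A i (f i) + x (f i)) {m : ℕ} {j : Fin n}
    (hj : IsPeriodicPt f m j) (hxj : x j ≠ ⊥) : m • lam ≤ ttr (tpow A m) := by
  have hcycle := add_le_tpow_iterate hf m j
  rw [hj.eq, WithBot.add_le_add_iff_right hxj] at hcycle
  exact hcycle.trans (Finset.le_sup (f := fun i => tpow A m i i) (Finset.mem_univ j))

end

theorem eigenvalue_le_specRad_general {n : ℕ} (A : Fin n → Fin n → R)
    (lam : R) (x : Fin n → R) (hx : ∃ i, x i ≠ ⊥)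
    (heig : ∀ i, matVec A x i = lam + x i) :
    lam ≤ specRad A := by
  obtain ⟨i₀, hi₀⟩ := hx
  rcases eq_or_ne lam ⊥ with rfl | hlam
  · exact bot_le
  have : Nonempty (Fin n) := ⟨i₀⟩
  choose f hf using exists_add_eq_matVec A x
  have hsel : ∀ i, lam + x i ≤ A i (f i) + x (f i) := fun i => ((hf i).trans (heig i)).ge
  obtain ⟨a, hper⟩ := exists_iterate_mem_periodicPts f i₀
  have hm := minimalPeriod_pos_of_mem_periodicPts hper
  have hmn : minimalPeriod f (f^[a] i₀) ≤ n :=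
    minimalPeriod_le_card.trans_eq (Fintype.card_fin n)
  refine le_trans (le_troot hm ?_) (troot_ttr_tpow_le_specRad A hm hmn)
  exact nsmul_le_ttr_tpow hsel (isPeriodicPt_minimalPeriod f _)
    (apply_iterate_ne_bot hsel hlam hi₀ a)

/-- Any max-plus eigenvalue of `A` is bounded by `max_{1 <= m <= n} (1/m) tr(A^m)`. -/
theorem eigenvalue_le_specRad {n : ℕ} (hn : 0 < n) (A : Fin n → Fin n → R)
    (lam : R) (x : Fin n → R) (hx : ∃ i, x i ≠ ⊥)
    (heig : ∀ i, matVec A x i = lam + x i) :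
    lam ≤ specRad A :=
  eigenvalue_le_specRad_general A lam x hx heig
end
end

section
/- (Extremal property of the tropical spectral radius) For an irreducible n×n matrix A over the max-plus semiring, min over all regular vectors x of x⁻ A x equals λ = ⊕_{m=1}^{n} tr^{1/m}(A^m), i.e., min_x max_{i,j}(a_{ij} + x_j − x_i) = max_{1≤m≤n} (1/m) tr(A^m). -/
noncomputable section

/-- The carrier of the max-plus semiring `ℝ_{max,+}`: the reals with `−∞` adjoined,
with tropical addition `⊔ = max` and tropical multiplication `+`. -/
local notation "R" => WithBot ℝ

/-!
Conjugating `A` by the diagonal matrix `diag x` leaves the diagonal of every power `Aᵐ`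
unchanged and turns `x⁻ A x` into the largest entry `q` of the conjugate; since a closed walk
of length `m` weighs at most `m q`, this gives `λ ≤ x⁻ A x`. Conversely, once `λ` is subtracted
from every entry, no cycle has positive weight, so cutting cycles out of long walks shows that
every power of `B = A - λ` is dominated by the Kleene star `B*`. A column `x = B*_{· j}`, finite
by irreducibility, then satisfies `B x ≤ x`, that is `x⁻ A x ≤ λ`.
-/

namespace MaxPlus

variable {n : ℕ}

lemma nsmul_bot {m : ℕ} (hm : 0 < m) : m • (⊥ : R) = ⊥ := by
  obtain ⟨k, rfl⟩ := Nat.exists_eq_add_of_lt hm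
  rw [succ_nsmul]
  exact WithBot.add_bot _

lemma coe_neg_add_add_coe (r : ℝ) (t : R) : ((-r : ℝ) : R) + t + (r : R) = t := by
  induction t using WithBot.recBotCoe with
  | bot => simp
  | coe a => norm_cast; ring

lemma troot_le_iff {m : ℕ} (hm : 0 < m) {t r : R} : troot m t ≤ r ↔ t ≤ m • r := by
  induction t using WithBot.recBotCoe with
  | bot => simp [troot]
  | coe s =>
    induction r using WithBot.recBotCoe with
    | bot => simp [troot, nsmul_bot hm]
    | coe q =>
      rw [troot, WithBot.map_coe, ← WithBot.coe_nsmul, WithBot.coe_le_coe, WithBot.coe_le_coe,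
        div_le_iff₀ (by exact_mod_cast hm), nsmul_eq_mul, mul_comm]

lemma tpow_succ_apply (A : Fin n → Fin n → R) (m : ℕ) (i j : Fin n) :
    tpow A (m + 1) i j = Finset.univ.sup fun k => A i k + tpow A m k j :=
  rfl

lemma add_le_tpow_succ (A : Fin n → Fin n → R) (m : ℕ) (i k j : Fin n) :
    A i k + tpow A m k j ≤ tpow A (m + 1) i j :=
  Finset.le_sup (f := fun k => A i k + tpow A m k j) (Finset.mem_univ k)

lemma tpow_add_le (A : Fin n → Fin n → R) (p q : ℕ) (i k j : Fin n) :
    tpow A p i k + tpow A q k j ≤ tpow A (p + q) i j := by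
  induction p generalizing i with
  | zero =>
    by_cases hik : i = k
    · subst hik
      simp [tpow, idMat]
    · simp [tpow, idMat, hik]
  | succ p ih =>
    obtain ⟨l, -, hl⟩ :=
      Finset.exists_mem_eq_sup Finset.univ ⟨i, Finset.mem_univ i⟩ fun l => A i l + tpow A p l k
    rw [← tpow_succ_apply] at hl
    rw [hl, add_assoc, Nat.add_right_comm]
    exact (add_le_add_right (ih l) _).trans (add_le_tpow_succ A _ i l j)

lemma tpow_le_nsmul {A : Fin n → Fin n → R} {q : R} (h : ∀ i j, A i j ≤ q) (m : ℕ)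
    (i j : Fin n) : tpow A m i j ≤ m • q := by
  induction m generalizing i with
  | zero =>
    simp only [tpow, idMat, zero_smul]
    split_ifs <;> simp
  | succ m ih =>
    rw [tpow_succ_apply, succ_nsmul']
    exact Finset.sup_le fun k _ => add_le_add (h i k) (ih k)

lemma tpow_add_const (A : Fin n → Fin n → R) (c : R) (m : ℕ) (i j : Fin n) :
    tpow (fun i j => A i j + c) m i j = tpow A m i j + m • c := by
  induction m generalizing i with
  | zero => simp [tpow]
  | succ m ih =>
    simp only [tpow, tmul, ih]
    rw [Finset.apply_sup_eq_sup_comp_of_linearOrder (· + (m + 1) • c)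
      (fun _ _ h => add_le_add_left h _) (WithBot.bot_add _)]
    refine Finset.sup_congr rfl fun k _ => ?_
    simp only [Function.comp, succ_nsmul']
    ac_rfl

lemma specRad_le_iff {A : Fin n → Fin n → R} {r : R} :
    specRad A ≤ r ↔ ∀ m, 1 ≤ m → m ≤ n → ∀ i, tpow A m i i ≤ m • r := by
  simp only [specRad, Finset.sup_le_iff, Finset.mem_Icc, and_imp]
  refine forall_congr' fun m => forall_congr' fun hm => forall_congr' fun _ => ?_
  simp [troot_le_iff hm, ttr]

lemma specRad_le_of_forall_le {A : Fin n → Fin n → R} {q : R} (h : ∀ i j, A i j ≤ q) :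
    specRad A ≤ q :=
  specRad_le_iff.mpr fun m _ _ i => tpow_le_nsmul h m i i

lemma specRad_add_const_le {A : Fin n → Fin n → R} {r : R} (h : specRad A ≤ r) (c : R) :
    specRad (fun i j => A i j + c) ≤ r + c := by
  refine specRad_le_iff.mpr fun m hm hmn i => ?_
  rw [tpow_add_const, nsmul_add]
  exact add_le_add_left (specRad_le_iff.mp h m hm hmn i) _

/-- The diagonal similarity `diag(-x) ⊗ A ⊗ diag(x)`. -/
def diagScale (A : Fin n → Fin n → R) (x : Fin n → ℝ) : Fin n → Fin n → R :=
  fun i j => ((-x i : ℝ) : R) + A i j + (x j : R)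

lemma tpow_diagScale (A : Fin n → Fin n → R) (x : Fin n → ℝ) (m : ℕ) (i j : Fin n) :
    tpow (diagScale A x) m i j = ((-x i : ℝ) : R) + tpow A m i j + (x j : R) := by
  induction m generalizing i with
  | zero =>
    by_cases hij : i = j
    · subst hij
      simp only [tpow, idMat, if_true]
      norm_cast
      simp
    · simp [tpow, idMat, hij]
  | succ m ih =>
    simp only [tpow, tmul, ih]
    rw [Finset.apply_sup_eq_sup_comp_of_linearOrder (fun t => ((-x i : ℝ) : R) + t + (x j : R))
      (fun _ _ h => add_le_add_left (add_le_add_right h _) _) (by simp)]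
    refine Finset.sup_congr rfl fun k _ => ?_
    simp only [diagScale, Function.comp]
    conv_rhs => rw [← coe_neg_add_add_coe (x k) (tpow A m k j)]
    ac_rfl

lemma specRad_diagScale (A : Fin n → Fin n → R) (x : Fin n → ℝ) :
    specRad (diagScale A x) = specRad A := by
  simp only [specRad, ttr, tpow_diagScale, coe_neg_add_add_coe]

lemma specRad_le_quadForm (A : Fin n → Fin n → R) (x : Fin n → ℝ) :
    specRad A ≤ quadForm A x :=
  specRad_diagScale A x ▸ specRad_le_of_forall_le fun i j =>
    Finset.le_sup (f := fun p : Fin n × Fin n => diagScale A x p.1 p.2) (Finset.mem_univ (i, j))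

/-- The weight of the walk `f 0 → f 1 → ⋯ → f m`. -/
def walkWeight (A : Fin n → Fin n → R) (f : ℕ → Fin n) (m : ℕ) : R :=
  ∑ k ∈ Finset.range m, A (f k) (f (k + 1))

lemma walkWeight_add (A : Fin n → Fin n → R) (f : ℕ → Fin n) (p q : ℕ) :
    walkWeight A f (p + q) = walkWeight A f p + walkWeight A (fun k => f (p + k)) q :=
  Finset.sum_range_add _ p q

lemma walkWeight_le_tpow (A : Fin n → Fin n → R) (f : ℕ → Fin n) (m : ℕ) :
    walkWeight A f m ≤ tpow A m (f 0) (f m) := by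
  induction m generalizing f with
  | zero => simp [walkWeight, tpow, idMat]
  | succ m ih =>
    rw [walkWeight, Finset.sum_range_succ', add_comm]
    exact (add_le_add_right (ih fun k => f (k + 1)) _).trans (add_le_tpow_succ A m _ _ _)

lemma exists_walk_tpow_le {A : Fin n → Fin n → R} {m : ℕ} {i j : Fin n}
    (h : tpow A m i j ≠ ⊥) :
    ∃ f : ℕ → Fin n, f 0 = i ∧ f m = j ∧ tpow A m i j ≤ walkWeight A f m := by
  induction m generalizing i with
  | zero =>
    obtain rfl : i = j := by
      by_contra hij
      simp [tpow, idMat, hij] at h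
    exact ⟨fun _ => i, rfl, rfl, by simp [tpow, idMat, walkWeight]⟩
  | succ m ih =>
    obtain ⟨k, -, hk⟩ :=
      Finset.exists_mem_eq_sup Finset.univ ⟨i, Finset.mem_univ i⟩ fun k => A i k + tpow A m k j
    rw [← tpow_succ_apply] at hk
    obtain ⟨g, rfl, hgm, hg⟩ := ih (i := k) fun h' => h (by simp [hk, h'])
    refine ⟨fun | 0 => i | t + 1 => g t, rfl, hgm, ?_⟩
    rw [hk, walkWeight, Finset.sum_range_succ', add_comm (Finset.sum _ _)]
    exact add_le_add_right hg _

lemma exists_lt_le_apply_eq (f : ℕ → Fin n) : ∃ a b, a < b ∧ b ≤ n ∧ f a = f b := by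
  obtain ⟨a, b, hab, hf⟩ :=
    Fintype.exists_ne_map_eq_of_card_lt (fun k : Fin (n + 1) => f k) (by simp)
  rcases lt_or_gt_of_ne hab with h | h
  · exact ⟨a, b, h, Nat.lt_succ_iff.mp b.isLt, hf⟩
  · exact ⟨b, a, h, Nat.lt_succ_iff.mp a.isLt, hf.symm⟩

/-- A walk of length at least `n` repeats a vertex within its first `n` steps; cutting out the
resulting cycle bounds `Aᵐ` by a shorter power plus a cycle of length at most `n`. -/
lemma exists_tpow_le_tpow_sub_add_cycle (A : Fin n → Fin n → R) {m : ℕ} (hm : n ≤ m)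
    (i j : Fin n) :
    ∃ d, 1 ≤ d ∧ d ≤ n ∧ ∃ v, tpow A m i j ≤ tpow A (m - d) i j + tpow A d v v := by
  rcases eq_or_ne (tpow A m i j) ⊥ with h | h
  · exact ⟨1, le_rfl, i.pos, i, by simp [h]⟩
  obtain ⟨f, rfl, hfm, hf⟩ := exists_walk_tpow_le h
  obtain ⟨a, b, hab, hbn, hfab⟩ := exists_lt_le_apply_eq f
  obtain ⟨d, rfl⟩ := Nat.exists_eq_add_of_le hab.le
  obtain ⟨r, rfl⟩ := Nat.exists_eq_add_of_le (hbn.trans hm)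
  refine ⟨d, by omega, by omega, f a, ?_⟩
  have hcyc := walkWeight_le_tpow A (fun k => f (a + k)) d
  have htail := walkWeight_le_tpow A (fun k => f (a + d + k)) r
  simp only [add_zero, ← hfab] at hcyc htail
  rw [hfm] at htail
  calc tpow A (a + d + r) (f 0) j
      ≤ walkWeight A f a + walkWeight A (fun k => f (a + k)) d
          + walkWeight A (fun k => f (a + d + k)) r := by
        rwa [← walkWeight_add, ← walkWeight_add]
    _ ≤ tpow A a (f 0) (f a) + tpow A d (f a) (f a) + tpow A r (f a) j := by
        gcongr
        exact walkWeight_le_tpow A f a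
    _ = tpow A a (f 0) (f a) + tpow A r (f a) j + tpow A d (f a) (f a) := add_right_comm ..
    _ ≤ tpow A (a + d + r - d) (f 0) j + tpow A d (f a) (f a) := by
        rw [show a + d + r - d = a + r by omega]
        gcongr
        exact tpow_add_le A a r _ _ _

lemma specRad_ne_bot {A : Fin n → Fin n → R} {m : ℕ} {i : Fin n} (hm : 1 ≤ m)
    (h : tpow A m i i ≠ ⊥) : specRad A ≠ ⊥ := by
  obtain ⟨d, hd, hdn, v, hv⟩ : ∃ d, 1 ≤ d ∧ d ≤ n ∧ ∃ v, tpow A d v v ≠ ⊥ := by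
    rcases le_or_gt m n with hmn | hmn
    · exact ⟨m, hm, hmn, i, h⟩
    · obtain ⟨d, hd, hdn, v, hle⟩ := exists_tpow_le_tpow_sub_add_cycle A hmn.le i i
      exact ⟨d, hd, hdn, v, fun hv => h (le_bot_iff.mp (by simpa [hv] using hle))⟩
  intro hbot
  exact hv (le_bot_iff.mp ((specRad_le_iff.mp hbot.le d hd hdn v).trans_eq (nsmul_bot hd)))

lemma tpow_le_star {A : Fin n → Fin n → R} (h : specRad A ≤ 0) (m : ℕ) (i j : Fin n) :
    tpow A m i j ≤ star A i j := by
  induction m using Nat.strong_induction_on with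
  | _ m ih =>
    rcases lt_or_ge m n with hm | hm
    · exact Finset.le_sup (f := fun m => tpow A m i j) (Finset.mem_range.mpr hm)
    obtain ⟨d, hd, hdn, v, hle⟩ := exists_tpow_le_tpow_sub_add_cycle A hm i j
    have hcyc : tpow A d v v ≤ 0 := by simpa using specRad_le_iff.mp h d hd hdn v
    calc tpow A m i j ≤ tpow A (m - d) i j + tpow A d v v := hle
      _ ≤ star A i j + 0 := add_le_add (ih _ (by omega)) hcyc
      _ = star A i j := add_zero _

lemma add_star_le_star {A : Fin n → Fin n → R} (h : specRad A ≤ 0) (i j k : Fin n) :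
    A i j + star A j k ≤ star A i k := by
  obtain ⟨m, -, hm⟩ := Finset.exists_mem_eq_sup (Finset.range n)
    ⟨0, Finset.mem_range.mpr j.pos⟩ fun m => tpow A m j k
  change star A j k = tpow A m j k at hm
  rw [hm]
  exact (add_le_tpow_succ A m i j k).trans (tpow_le_star h _ i k)

lemma quadForm_le_of_add_le {A : Fin n → Fin n → R} {x : Fin n → ℝ} {L : ℝ}
    (h : ∀ i j, A i j + ((-L : ℝ) : R) + (x j : R) ≤ (x i : R)) : quadForm A x ≤ L := by
  refine Finset.sup_le fun p _ => ?_
  have hp := h p.1 p.2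
  revert hp
  induction A p.1 p.2 using WithBot.recBotCoe with
  | bot => simp
  | coe a =>
    intro hp
    norm_cast at hp ⊢
    linarith

end MaxPlus

open MaxPlus in
/-- Extremal property of the tropical spectral radius: for an irreducible matrix `A`,
the minimum of `x⁻ A x` over all regular vectors `x` equals the spectral radius. -/
theorem min_quadForm_eq_specRad {n : ℕ} (hn : 0 < n) (A : Fin n → Fin n → R)
    (hirr : Irred A) :
    IsLeast {t : R | ∃ x : Fin n → ℝ, quadForm A x = t} (specRad A) := by
  refine ⟨?_, fun _ ⟨x, hx⟩ => hx ▸ specRad_le_quadForm A x⟩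
  let j : Fin n := ⟨0, hn⟩
  obtain ⟨m, hm, hjj⟩ := hirr j j
  obtain ⟨L, hL⟩ := WithBot.ne_bot_iff_exists.mp (specRad_ne_bot hm hjj)
  set B : Fin n → Fin n → R := fun i k => A i k + ((-L : ℝ) : R)
  have hB : specRad B ≤ 0 := by
    simpa [← WithBot.coe_add] using specRad_add_const_le hL.ge ((-L : ℝ) : R)
  have hfin : ∀ i, star B i j ≠ ⊥ := fun i => by
    obtain ⟨m, -, hij⟩ := hirr i j
    refine ne_bot_of_le_ne_bot ?_ (tpow_le_star hB m i j)
    rw [tpow_add_const, ← WithBot.coe_nsmul]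
    exact WithBot.add_ne_bot.mpr ⟨hij, WithBot.coe_ne_bot⟩
  choose x hx using fun i => WithBot.ne_bot_iff_exists.mp (hfin i)
  refine ⟨x, le_antisymm ?_ (specRad_le_quadForm A x)⟩
  rw [← hL]
  refine quadForm_le_of_add_le fun i k => ?_
  simpa only [hx] using add_star_le_star hB i k j
end
end

section
/- (Main theorem, value of the constrained tropical optimization problem) Let A, B be n×n matrices over the max-plus semiring with at least one of them irreducible, the spectral radius λ of A satisfying λ > −∞, and Tr(B) ≤ 0. Then the minimum of x⁻ A x over all regular vectors x satisfying B x ≤ x equals θ = ⨁_{k=1}^{n} ⨁_{0 ≤ i₁+⋯+i_k ≤ n−k} tr^{1/k}(A B^{i₁} ⋯ A B^{i_k}). -/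
noncomputable section

/-- The carrier of the max-plus semiring `ℝ_{max,+}`: the reals with `−∞` adjoined,
with tropical addition `⊔ = max` and tropical multiplication `+`. -/
local notation "R" => WithBot ℝ

/-- The product `A B^{i₁} ⋯ A B^{i_k}` for a tuple of exponents `t : Fin k → ℕ`. -/
def prodTup {n k : ℕ} (A B : Fin n → Fin n → R) (t : Fin k → ℕ) : Fin n → Fin n → R :=
  (List.ofFn fun j => tmul A (tpow B (t j))).foldr tmul (idMat n)

/-- The value `θ = ⨁_{k=1}^n ⨁_{0 ≤ i₁+⋯+i_k ≤ n−k} tr^{1/k}(A B^{i₁} ⋯ A B^{i_k})`. -/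
def theta {n : ℕ} (A B : Fin n → Fin n → R) : R :=
  (Finset.Icc 1 n).sup fun k =>
    (Finset.range (n - k + 1)).sup fun s =>
      (Finset.Nat.antidiagonalTuple k s).sup fun t => troot k (ttr (prodTup A B t))

/-!
If `B x ≤ x` and `μ = x⁻ A x`, then `A x ≤ μ x`, and such subeigenvector inequalities multiply:
every product `A B^{i₁} ⋯ A B^{i_k}` maps `x` below `μ^k x`, so its trace is at most `μ^k`,
whence `θ ≤ μ`.

Conversely put `C = θ⁻¹ A ⊕ B`. A diagonal entry of `C^m` is attained by a single word
`B^a A B^{i₁} ⋯ A B^{i_k}`; moving `B^a` cyclically to the end merges it into the last block,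
so its trace is `tr(B^m)` or `θ^{-k} tr(A B^{j₁} ⋯ A B^{j_k})` with `j₁ + ⋯ + j_k ≤ n − k`,
and both are `≤ 0`: `Tr C ≤ 0`. A walk longer than `n` in the digraph of `C` contains a cycle of length at
most `n`, which has nonpositive weight, so every power of `C` lies below the Kleene star `C*`;
thus `C C* ≤ C*`, and the row maxima of `C*` form a real vector `x` with `C x ≤ x`, that is,
`B x ≤ x` and `A x ≤ θ x`, i.e. `x⁻ A x ≤ θ`.
-/

section Scalars

lemma add_finset_sup {ι : Type*} (s : Finset ι) (f : ι → R) (c : R) :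
    c + s.sup f = s.sup fun k => c + f k :=
  Finset.apply_sup_eq_sup_comp_of_linearOrder (c + ·) (fun _ _ h => add_le_add_right h c)
    (WithBot.add_bot c)

lemma finset_sup_add {ι : Type*} (s : Finset ι) (f : ι → R) (c : R) :
    s.sup f + c = s.sup fun k => f k + c :=
  Finset.apply_sup_eq_sup_comp_of_linearOrder (· + c) (fun _ _ h => add_le_add_left h c)
    (WithBot.bot_add c)

end Scalars

section Matrices

variable {n : ℕ}

lemma le_tmul (A B : Fin n → Fin n → R) (i k j : Fin n) : A i k + B k j ≤ tmul A B i j :=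
  Finset.le_sup (f := fun k => A i k + B k j) (Finset.mem_univ k)

lemma tmul_assoc (A B C : Fin n → Fin n → R) : tmul (tmul A B) C = tmul A (tmul B C) := by
  funext i j
  simp only [tmul, finset_sup_add, add_finset_sup, add_assoc]
  exact Finset.sup_comm _ _ _

lemma tmul_idMat (A : Fin n → Fin n → R) : tmul A (idMat n) = A := by
  funext i j
  refine le_antisymm (Finset.sup_le fun k _ => ?_) ?_
  · by_cases h : k = j <;> simp [idMat, h]
  · simpa [idMat] using le_tmul A (idMat n) i j j

lemma idMat_tmul (A : Fin n → Fin n → R) : tmul (idMat n) A = A := by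
  funext i j
  refine le_antisymm (Finset.sup_le fun k _ => ?_) ?_
  · by_cases h : i = k <;> simp [idMat, h]
  · simpa [idMat] using le_tmul (idMat n) A i i j

lemma tpow_zero (A : Fin n → Fin n → R) : tpow A 0 = idMat n := rfl

lemma tpow_succ (A : Fin n → Fin n → R) (m : ℕ) : tpow A (m + 1) = tmul A (tpow A m) := rfl

lemma tpow_add (A : Fin n → Fin n → R) (s t : ℕ) :
    tpow A (s + t) = tmul (tpow A s) (tpow A t) := by
  induction s with
  | zero => rw [zero_add, tpow_zero, idMat_tmul]
  | succ s ih => rw [Nat.succ_add, tpow_succ, tpow_succ, ih, tmul_assoc]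

lemma le_ttr (A : Fin n → Fin n → R) (i : Fin n) : A i i ≤ ttr A :=
  Finset.le_sup (f := fun i => A i i) (Finset.mem_univ i)

lemma ttr_tmul_comm (A B : Fin n → Fin n → R) : ttr (tmul A B) = ttr (tmul B A) := by
  simp only [ttr, tmul]
  rw [Finset.sup_comm]
  simp only [add_comm]

lemma ttr_tpow_le_Tr (A : Fin n → Fin n → R) {m : ℕ} (h1 : 1 ≤ m) (hn : m ≤ n) :
    ttr (tpow A m) ≤ Tr A :=
  Finset.le_sup (f := fun m => ttr (tpow A m)) (Finset.mem_Icc.2 ⟨h1, hn⟩)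

end Matrices

section Walks

def walkWeight {α M : Type*} [AddMonoid M] (C : α → α → M) : List α → M
  | a :: b :: l => C a b + walkWeight C (b :: l)
  | _ => 0

lemma walkWeight_append_cons {α M : Type*} [AddMonoid M] (C : α → α → M) (s : List α)
    (a : α) (v : List α) :
    walkWeight C (s ++ a :: v) = walkWeight C (s ++ [a]) + walkWeight C (a :: v) := by
  induction s with
  | nil => simp [walkWeight]
  | cons x s ih =>
    cases s with
    | nil => simp [walkWeight]
    | cons y s => simp only [List.cons_append, walkWeight] at ih ⊢; rw [ih, add_assoc]

lemma exists_short_cycle {α : Type*} [Fintype α] {w : List α} (hw : Fintype.card α < w.length) :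
    ∃ s a t v, w = s ++ a :: (t ++ a :: v) ∧ t.length < Fintype.card α := by
  have hdup : ¬ (w.take (Fintype.card α + 1)).Nodup := fun h => by
    have := h.length_le_card
    simp only [List.length_take] at this
    omega
  obtain ⟨a, ha⟩ := not_forall_not.1 (mt List.nodup_iff_sublist.2 hdup)
  obtain ⟨r₁, r₂, hr, ha₁, ha₂⟩ := List.cons_sublist_iff.1 ha
  obtain ⟨s, t, rfl⟩ := List.append_of_mem ha₁
  obtain ⟨u, v, rfl⟩ := List.append_of_mem (List.singleton_sublist.1 ha₂)
  refine ⟨s, a, t ++ u, v ++ w.drop (Fintype.card α + 1), ?_, ?_⟩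
  · conv_lhs => rw [← List.take_append_drop (Fintype.card α + 1) w, hr]
    simp
  · have := congrArg List.length hr
    simp only [List.length_take, List.length_append, List.length_cons] at this ⊢
    omega

variable {n : ℕ} (C : Fin n → Fin n → R)

lemma walkWeight_le_tpow : ∀ {w : List (Fin n)} {i j : Fin n},
    w.head? = some i → w.getLast? = some j → walkWeight C w ≤ tpow C (w.length - 1) i j
  | [a], i, j, hi, hj => by
    simp only [List.head?_cons, List.getLast?_singleton, Option.some.injEq] at hi hj
    subst hi hj
    simp [walkWeight, tpow, idMat]
  | a :: b :: l, i, j, hi, hj => by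
    simp only [List.head?_cons, Option.some.injEq] at hi
    subst hi
    have hj' : (b :: l).getLast? = some j := by simpa [List.getLast?_cons_cons] using hj
    calc walkWeight C (a :: b :: l) = C a b + walkWeight C (b :: l) := rfl
      _ ≤ C a b + tpow C l.length b j := add_le_add_right (walkWeight_le_tpow rfl hj') _
      _ ≤ tpow C (l.length + 1) a j := le_tmul _ _ _ _ _

end Walks

section Star

variable {n : ℕ} {C : Fin n → Fin n → R}

lemma walkWeight_le_star (hC : Tr C ≤ 0) {w : List (Fin n)} {i j : Fin n}
    (hi : w.head? = some i) (hj : w.getLast? = some j) : walkWeight C w ≤ star C i j := by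
  induction hlen : w.length using Nat.strong_induction_on generalizing w with
  | _ len ih =>
    by_cases hw : n < w.length
    · obtain ⟨s, a, t, v, rfl, ht⟩ := exists_short_cycle (w := w) (by simpa using hw)
      rw [Fintype.card_fin] at ht
      have hcycle : walkWeight C (a :: t ++ [a]) ≤ 0 := calc
        _ ≤ tpow C (t.length + 1) a a := by
            simpa using walkWeight_le_tpow C (w := a :: t ++ [a]) rfl
              (List.getLast?_eq_some_iff.2 ⟨a :: t, rfl⟩)
        _ ≤ ttr (tpow C (t.length + 1)) := le_ttr _ a
        _ ≤ Tr C := ttr_tpow_le_Tr C (by omega) (by omega)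
        _ ≤ 0 := hC
      have hj' : (s ++ a :: v).getLast? = some j := by
        rwa [show s ++ a :: (t ++ a :: v) = (s ++ a :: t) ++ a :: v by simp,
          List.getLast?_append_of_ne_nil _ (List.cons_ne_nil _ _),
          ← List.getLast?_append_of_ne_nil s (List.cons_ne_nil _ _)] at hj
      calc walkWeight C (s ++ a :: (t ++ a :: v))
          = walkWeight C (s ++ [a]) + walkWeight C (a :: t ++ [a]) + walkWeight C (a :: v) := by
            rw [walkWeight_append_cons C s a (t ++ a :: v), ← List.cons_append,
              walkWeight_append_cons C (a :: t) a v, add_assoc]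
        _ ≤ walkWeight C (s ++ [a]) + 0 + walkWeight C (a :: v) := by gcongr
        _ = walkWeight C (s ++ a :: v) := by rw [add_zero, walkWeight_append_cons C s a v]
        _ ≤ star C i j := ih _ (by subst hlen; simp) (by simpa using hi) hj' rfl
    · calc walkWeight C w ≤ tpow C (w.length - 1) i j := walkWeight_le_tpow C hi hj
        _ ≤ star C i j := Finset.le_sup (f := fun m => tpow C m i j)
            (Finset.mem_range.2 (by have := i.pos; omega))

lemma walkWeight_add_tpow_le_star (hC : Tr C ≤ 0) (m : ℕ) (j : Fin n) :
    ∀ {w : List (Fin n)} {i k : Fin n}, w.head? = some i → w.getLast? = some k →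
      walkWeight C w + tpow C m k j ≤ star C i j := by
  induction m with
  | zero =>
    intro w i k hi hk
    by_cases h : k = j
    · subst h; simpa [tpow, idMat] using walkWeight_le_star hC hi hk
    · simp [tpow, idMat, h]
  | succ m ih =>
    intro w i k hi hk
    obtain ⟨w, rfl⟩ := List.getLast?_eq_some_iff.1 hk
    rw [tpow_succ, tmul, add_finset_sup]
    refine Finset.sup_le fun l _ => ?_
    have hstep : walkWeight C (w ++ [k]) + C k l = walkWeight C (w ++ [k, l]) := by
      rw [show w ++ [k, l] = w ++ k :: [l] from rfl, walkWeight_append_cons C w k [l]]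
      simp [walkWeight]
    rw [← add_assoc, hstep]
    exact ih (by simpa using hi) (by simp)

lemma tpow_le_star (hC : Tr C ≤ 0) (m : ℕ) (i j : Fin n) : tpow C m i j ≤ star C i j := by
  simpa [walkWeight] using walkWeight_add_tpow_le_star hC m j (w := [i]) rfl rfl

lemma tmul_star_le (hC : Tr C ≤ 0) (i j : Fin n) : tmul C (star C) i j ≤ star C i j := by
  refine Finset.sup_le fun k _ => ?_
  change C i k + (Finset.range n).sup (fun m => tpow C m k j) ≤ _
  rw [add_finset_sup]
  exact Finset.sup_le fun m _ => (le_tmul C (tpow C m) i k j).trans (tpow_le_star hC (m + 1) i j)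

end Star

section Subeigenvectors

variable {n : ℕ}

def IsSubeigenvector (M : Fin n → Fin n → R) (c : R) (x : Fin n → ℝ) : Prop :=
  ∀ i j, M i j + (x j : R) ≤ c + (x i : R)

variable {x : Fin n → ℝ}

lemma isSubeigenvector_idMat : IsSubeigenvector (idMat n) 0 x := by
  intro i j
  by_cases h : i = j <;> simp [idMat, h]

lemma IsSubeigenvector.tmul {P Q : Fin n → Fin n → R} {p q : R} (hP : IsSubeigenvector P p x)
    (hQ : IsSubeigenvector Q q x) : IsSubeigenvector (tmul P Q) (p + q) x := by
  intro i j
  rw [_root_.tmul, finset_sup_add]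
  refine Finset.sup_le fun k _ => ?_
  calc P i k + Q k j + (x j : R) ≤ P i k + (q + x k) := by
        rw [add_assoc]; exact add_le_add_right (hQ k j) _
    _ = (P i k + x k) + q := by abel
    _ ≤ (p + x i) + q := add_le_add_left (hP i k) _
    _ = (p + q) + x i := by abel

lemma IsSubeigenvector.tpow {B : Fin n → Fin n → R} (hB : IsSubeigenvector B 0 x) (m : ℕ) :
    IsSubeigenvector (tpow B m) 0 x := by
  induction m with
  | zero => exact isSubeigenvector_idMat
  | succ m ih => simpa [tpow_succ] using hB.tmul ih

lemma IsSubeigenvector.mono {M M' : Fin n → Fin n → R} {c : R}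
    (hM : ∀ i j, M i j ≤ M' i j) (h : IsSubeigenvector M' c x) : IsSubeigenvector M c x :=
  fun i j => (add_le_add_left (hM i j) _).trans (h i j)

lemma IsSubeigenvector.ttr_le {M : Fin n → Fin n → R} {c : R} (hM : IsSubeigenvector M c x) :
    ttr M ≤ c :=
  Finset.sup_le fun i _ => (WithBot.add_le_add_iff_right (WithBot.coe_ne_bot (a := x i))).1 (hM i i)

lemma isSubeigenvector_zero_iff {M : Fin n → Fin n → R} :
    IsSubeigenvector M 0 x ↔ ∀ i, matVec M (vec x) i ≤ vec x i := by
  simp only [IsSubeigenvector, matVec, vec, zero_add, Finset.sup_le_iff, Finset.mem_univ,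
    true_implies]

lemma quadForm_le_iff {A : Fin n → Fin n → R} {c : R} :
    quadForm A x ≤ c ↔ IsSubeigenvector A c x := by
  simp only [quadForm, Finset.sup_le_iff, Finset.mem_univ, true_implies, Prod.forall,
    IsSubeigenvector]
  refine forall₂_congr fun i j => ?_
  rw [← WithBot.add_le_add_iff_left (WithBot.coe_ne_bot (a := x i)), add_comm c,
    add_assoc, ← add_assoc (x i : R), ← WithBot.coe_add, add_neg_cancel, WithBot.coe_zero,
    zero_add]

lemma exists_isSubeigenvector_zero {C : Fin n → Fin n → R} (hC : Tr C ≤ 0) :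
    ∃ x : Fin n → ℝ, IsSubeigenvector C 0 x := by
  have hpos : ∀ i, (0 : R) ≤ Finset.univ.sup (star C i) := fun i => calc
    (0 : R) = tpow C 0 i i := by simp [tpow, idMat]
    _ ≤ star C i i := Finset.le_sup (f := fun m => tpow C m i i) (Finset.mem_range.2 i.pos)
    _ ≤ _ := Finset.le_sup (Finset.mem_univ i)
  choose x hx using fun i =>
    WithBot.ne_bot_iff_exists.1 (ne_bot_of_le_ne_bot WithBot.coe_ne_bot (hpos i))
  refine ⟨x, fun i j => ?_⟩
  rw [hx i, hx j, zero_add, add_finset_sup]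
  exact Finset.sup_le fun k _ => (le_tmul C (star C) i j k).trans
    ((tmul_star_le hC i k).trans (Finset.le_sup (Finset.mem_univ k)))

end Subeigenvectors

section Blocks

variable {n : ℕ}

def blocksProd (A B : Fin n → Fin n → R) (L : List ℕ) : Fin n → Fin n → R :=
  (L.map fun i => tmul A (tpow B i)).foldr tmul (idMat n)

variable (A B : Fin n → Fin n → R)

lemma blocksProd_nil : blocksProd A B [] = idMat n := rfl

lemma blocksProd_cons (i : ℕ) (L : List ℕ) :
    blocksProd A B (i :: L) = tmul (tmul A (tpow B i)) (blocksProd A B L) := rfl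

lemma blocksProd_append (L₁ L₂ : List ℕ) :
    blocksProd A B (L₁ ++ L₂) = tmul (blocksProd A B L₁) (blocksProd A B L₂) := by
  induction L₁ with
  | nil => rw [List.nil_append, blocksProd_nil, idMat_tmul]
  | cons i L ih => rw [List.cons_append, blocksProd_cons, blocksProd_cons, ih, ← tmul_assoc]

lemma prodTup_eq_blocksProd {k : ℕ} (t : Fin k → ℕ) :
    prodTup A B t = blocksProd A B (List.ofFn t) := by
  rw [prodTup, blocksProd, List.map_ofFn]
  rfl

lemma blocksProd_replicate_zero (m : ℕ) : blocksProd A B (List.replicate m 0) = tpow A m := by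
  induction m with
  | zero => rfl
  | succ m ih => rw [List.replicate_succ, blocksProd_cons, ih, tpow_zero, tmul_idMat, tpow_succ]

lemma blocksProd_concat_tmul_tpow (L : List ℕ) (b a : ℕ) :
    tmul (blocksProd A B (L ++ [b])) (tpow B a) = blocksProd A B (L ++ [b + a]) := by
  rw [blocksProd_append, blocksProd_append, tmul_assoc, blocksProd_cons, blocksProd_cons,
    blocksProd_nil, tmul_idMat, tmul_idMat, tmul_assoc, ← tpow_add]

end Blocks

section Scaling

variable {n : ℕ}

def tsmul (c : R) (M : Fin n → Fin n → R) : Fin n → Fin n → R := fun i j => c + M i j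

lemma tsmul_zero (M : Fin n → Fin n → R) : tsmul 0 M = M := by
  funext i j; exact zero_add _

lemma tsmul_tsmul (c d : R) (M : Fin n → Fin n → R) :
    tsmul c (tsmul d M) = tsmul (c + d) M := by
  funext i j; exact (add_assoc _ _ _).symm

lemma tmul_tsmul_left (c : R) (X Y : Fin n → Fin n → R) :
    tmul (tsmul c X) Y = tsmul c (tmul X Y) := by
  funext i j
  simp only [tmul, tsmul, add_finset_sup, add_assoc]

lemma tmul_tsmul_right (c : R) (X Y : Fin n → Fin n → R) :
    tmul X (tsmul c Y) = tsmul c (tmul X Y) := by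
  funext i j
  simp only [tmul, tsmul, add_finset_sup, add_left_comm]

lemma ttr_tsmul (c : R) (M : Fin n → Fin n → R) : ttr (tsmul c M) = c + ttr M :=
  (add_finset_sup _ _ _).symm

lemma blocksProd_tsmul (c : R) (A B : Fin n → Fin n → R) (L : List ℕ) :
    blocksProd (tsmul c A) B L = tsmul (L.length • c) (blocksProd A B L) := by
  induction L with
  | nil => rw [blocksProd_nil, blocksProd_nil, List.length_nil, zero_nsmul, tsmul_zero]
  | cons i L ih =>
    rw [blocksProd_cons, blocksProd_cons, tmul_tsmul_left, ih, tmul_tsmul_right, tmul_tsmul_left,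
      tsmul_tsmul, List.length_cons, succ_nsmul]

lemma IsSubeigenvector.of_tsmul {x : Fin n → ℝ} {M : Fin n → Fin n → R} {c : ℝ} {d : R}
    (h : IsSubeigenvector (tsmul (c : R) M) d x) : IsSubeigenvector M ((-c : ℝ) + d) x := by
  intro i j
  have hc : ((-c : ℝ) : R) + (c : R) = 0 := by
    rw [← WithBot.coe_add, neg_add_cancel, WithBot.coe_zero]
  calc M i j + (x j : R) = ((-c : ℝ) : R) + (tsmul (c : R) M i j + x j) := by
        rw [tsmul, ← add_assoc, ← add_assoc, hc, zero_add]
    _ ≤ ((-c : ℝ) : R) + (d + x i) := add_le_add_right (h i j) _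
    _ = ((-c : ℝ) + d) + x i := (add_assoc _ _ _).symm

end Scaling

section Theta

variable {n : ℕ}

lemma nsmul_bot {k : ℕ} (hk : k ≠ 0) : k • (⊥ : R) = ⊥ := by
  obtain ⟨k, rfl⟩ := Nat.exists_eq_succ_of_ne_zero hk
  rw [succ_nsmul, WithBot.add_bot]

lemma troot_le_iff {k : ℕ} (hk : k ≠ 0) {t c : R} : troot k t ≤ c ↔ t ≤ k • c := by
  induction t using WithBot.recBotCoe with
  | bot => simp [troot]
  | coe r =>
    induction c using WithBot.recBotCoe with
    | bot => simp [troot, nsmul_bot hk]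
    | coe s =>
      have hk' : (0 : ℝ) < k := by positivity
      rw [troot, WithBot.map_coe, ← WithBot.coe_nsmul, WithBot.coe_le_coe, WithBot.coe_le_coe,
        div_le_iff₀ hk', nsmul_eq_mul, mul_comm]

variable (A B : Fin n → Fin n → R)

lemma troot_ttr_blocksProd_le_theta {L : List ℕ} (hL : L ≠ []) (hLn : L.length + L.sum ≤ n) :
    troot L.length (ttr (blocksProd A B L)) ≤ theta A B := by
  have hk : L.length ∈ Finset.Icc 1 n := Finset.mem_Icc.2 ⟨List.length_pos_iff.2 hL, by omega⟩
  have hs : L.sum ∈ Finset.range (n - L.length + 1) := Finset.mem_range.2 (by omega)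
  have ht : L.get ∈ Finset.Nat.antidiagonalTuple L.length L.sum := by
    rw [Finset.Nat.mem_antidiagonalTuple, ← List.sum_ofFn, List.ofFn_get]
  refine le_trans ?_ (Finset.le_sup hk)
  refine le_trans ?_ (Finset.le_sup hs)
  refine le_trans ?_ (Finset.le_sup ht)
  rw [prodTup_eq_blocksProd, List.ofFn_get]

lemma theta_ne_bot (hlam : ⊥ < specRad A) : theta A B ≠ ⊥ := by
  obtain ⟨m, hm, hne⟩ : ∃ m ∈ Finset.Icc 1 n, troot m (ttr (tpow A m)) ≠ ⊥ := by
    by_contra! h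
    exact hlam.ne' ((Finset.sup_eq_bot_iff _ _).2 h)
  rw [Finset.mem_Icc] at hm
  have := troot_ttr_blocksProd_le_theta A B (L := List.replicate m 0)
    (by simp; omega) (by simpa using hm.2)
  rw [List.length_replicate, blocksProd_replicate_zero] at this
  exact ne_bot_of_le_ne_bot hne this

end Theta

section MixedPowers

variable {n : ℕ} (D B : Fin n → Fin n → R)

lemma exists_tpow_sup_le_tmul_blocksProd (m : ℕ) (i j : Fin n) :
    ∃ a L, a + L.length + L.sum = m ∧
      tpow (D ⊔ B) m i j ≤ tmul (tpow B a) (blocksProd D B L) i j := by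
  induction m generalizing i with
  | zero => exact ⟨0, [], rfl, by simp [tpow_zero, blocksProd_nil, idMat_tmul]⟩
  | succ m ih =>
    obtain ⟨k, -, hk⟩ := Finset.exists_mem_eq_sup Finset.univ ⟨i, Finset.mem_univ i⟩
      fun k => (D ⊔ B) i k + tpow (D ⊔ B) m k j
    obtain ⟨a, L, hlen, hle⟩ := ih k
    rw [tpow_succ, tmul, hk, Pi.sup_apply, Pi.sup_apply]
    rcases le_total (D i k) (B i k) with h | h
    · refine ⟨a + 1, L, by omega, ?_⟩
      rw [sup_eq_right.2 h, tpow_succ, tmul_assoc]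
      exact (add_le_add_right hle _).trans (le_tmul _ _ i k j)
    · refine ⟨0, a :: L, by simp; omega, ?_⟩
      rw [sup_eq_left.2 h, tpow_zero, idMat_tmul, blocksProd_cons, tmul_assoc]
      exact (add_le_add_right hle _).trans (le_tmul _ _ i k j)

lemma exists_ttr_tpow_tmul_blocksProd_eq (a : ℕ) {L : List ℕ} (hL : L ≠ []) :
    ∃ L' : List ℕ, L' ≠ [] ∧ L'.length + L'.sum = a + L.length + L.sum ∧
      ttr (tmul (tpow B a) (blocksProd D B L)) = ttr (blocksProd D B L') := by
  obtain ⟨L, b, rfl⟩ : ∃ L₀ b, L = L₀ ++ [b] :=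
    ⟨L.dropLast, L.getLast hL, (List.dropLast_append_getLast hL).symm⟩
  refine ⟨L ++ [b + a], by simp, by simp; omega, ?_⟩
  rw [ttr_tmul_comm, blocksProd_concat_tmul_tpow]

end MixedPowers

section ThetaBounds

variable {n : ℕ} {A B : Fin n → Fin n → R}

lemma IsSubeigenvector.blocksProd {x : Fin n → ℝ} {μ : R} (hA : IsSubeigenvector A μ x)
    (hB : IsSubeigenvector B 0 x) (L : List ℕ) :
    IsSubeigenvector (blocksProd A B L) (L.length • μ) x := by
  induction L with
  | nil => simpa [blocksProd_nil] using isSubeigenvector_idMat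
  | cons i L ih =>
    rw [blocksProd_cons, List.length_cons, succ_nsmul']
    simpa using (hA.tmul (hB.tpow i)).tmul ih

lemma theta_le_of_isSubeigenvector {x : Fin n → ℝ} {μ : R} (hA : IsSubeigenvector A μ x)
    (hB : IsSubeigenvector B 0 x) : theta A B ≤ μ := by
  refine Finset.sup_le fun k hk => Finset.sup_le fun s _ => Finset.sup_le fun t _ => ?_
  rw [troot_le_iff (by simp at hk; omega), prodTup_eq_blocksProd]
  simpa using (hA.blocksProd hB (List.ofFn t)).ttr_le

lemma ttr_blocksProd_tsmul_neg_theta_le_zero {θ : ℝ} (hθ : theta A B = θ) {L : List ℕ}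
    (hL : L ≠ []) (hLn : L.length + L.sum ≤ n) :
    ttr (blocksProd (tsmul ((-θ : ℝ) : R) A) B L) ≤ 0 := by
  have h := troot_ttr_blocksProd_le_theta A B hL hLn
  rw [hθ, troot_le_iff (by simpa using hL)] at h
  calc ttr (blocksProd (tsmul ((-θ : ℝ) : R) A) B L)
      = L.length • ((-θ : ℝ) : R) + ttr (blocksProd A B L) := by
        rw [blocksProd_tsmul, ttr_tsmul]
    _ ≤ L.length • ((-θ : ℝ) : R) + L.length • (θ : R) := add_le_add_right h _
    _ = 0 := by
        rw [← nsmul_add, ← WithBot.coe_add, neg_add_cancel, WithBot.coe_zero, nsmul_zero]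

lemma Tr_tsmul_neg_theta_sup_le_zero {θ : ℝ} (hθ : theta A B = θ) (hB : Tr B ≤ 0) :
    Tr (tsmul ((-θ : ℝ) : R) A ⊔ B) ≤ 0 := by
  refine Finset.sup_le fun m hm => Finset.sup_le fun i _ => ?_
  rw [Finset.mem_Icc] at hm
  obtain ⟨a, L, hlen, hle⟩ :=
    exists_tpow_sup_le_tmul_blocksProd (tsmul ((-θ : ℝ) : R) A) B m i i
  refine hle.trans ((le_ttr _ i).trans ?_)
  rcases eq_or_ne L [] with rfl | hL
  · obtain rfl : a = m := by simpa using hlen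
    rw [blocksProd_nil, tmul_idMat]
    exact (ttr_tpow_le_Tr B hm.1 hm.2).trans hB
  · obtain ⟨L', hL', hlen', heq⟩ := exists_ttr_tpow_tmul_blocksProd_eq _ B a hL
    rw [heq]
    exact ttr_blocksProd_tsmul_neg_theta_le_zero hθ hL' (by omega)

end ThetaBounds

theorem constrained_min_eq_theta_general {n : ℕ} (A B : Fin n → Fin n → R)
    (hlam : ⊥ < specRad A) (hTrB : Tr B ≤ (0 : R)) :
    IsLeast {t : R | ∃ x : Fin n → ℝ,
      (∀ i, matVec B (vec x) i ≤ vec x i) ∧ quadForm A x = t} (theta A B) := by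
  obtain ⟨θ, hθ⟩ := WithBot.ne_bot_iff_exists.1 (theta_ne_bot A B hlam)
  obtain ⟨x, hx⟩ := exists_isSubeigenvector_zero (Tr_tsmul_neg_theta_sup_le_zero hθ.symm hTrB)
  have hxA : IsSubeigenvector A (theta A B) x := by
    simpa [← hθ] using (hx.mono fun i j => le_sup_left).of_tsmul
  have hxB : IsSubeigenvector B 0 x := hx.mono fun i j => le_sup_right
  have hlower : ∀ z, IsSubeigenvector B 0 z → theta A B ≤ quadForm A z := fun z hz =>
    theta_le_of_isSubeigenvector (quadForm_le_iff.1 le_rfl) hz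
  have hxθ : quadForm A x = theta A B := (quadForm_le_iff.2 hxA).antisymm (hlower x hxB)
  refine ⟨⟨x, isSubeigenvector_zero_iff.1 hxB, hxθ⟩, ?_⟩
  rintro _ ⟨z, hz, rfl⟩
  exact hlower z (isSubeigenvector_zero_iff.2 hz)

/-- Main theorem (value): under the stated hypotheses, the minimum of `x⁻ A x`
over all regular vectors `x` satisfying `B x ≤ x` equals `θ`. -/
theorem constrained_min_eq_theta {n : ℕ} (hn : 0 < n) (A B : Fin n → Fin n → R)
    (hirr : Irred A ∨ Irred B) (hlam : ⊥ < specRad A) (hTrB : Tr B ≤ (0 : R)) :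
    IsLeast {t : R | ∃ x : Fin n → ℝ,
      (∀ i, matVec B (vec x) i ≤ vec x i) ∧ quadForm A x = t} (theta A B) :=
  constrained_min_eq_theta_general A B hlam hTrB
end
end
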